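/- arXiv:math/9809073 — 8 statements merged into one kernel-verified Lean document; each statement's English description precedes it below -/
import Mathlib

section
/- Let A be a uniform algebra on a compact Hausdorff space X. Suppose that A is strongly regular on X, i.e. for every x ∈ X the ideal J_x is uniformly dense in M_x. Then (a) every character of A is an evaluation character ε_x for some x ∈ X (so the character space of A is X), and (b) A is normal on X. -/
open Topology

set_option maxHeartbeats 1000000 in
theorem wilken_two_point {X : Type*} [TopologicalSpace X] [CompactSpace X] [T2Space X]
    (A : Subalgebra ℂ C(X, ℂ)) (hA : IsClosed (A : Set C(X, ℂ)))
    (hsep : ∀ x y : X, x ≠ y → ∃ f ∈ A, f x ≠ f y)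
    (hsr : ∀ x : X,
      {f : C(X, ℂ) | f ∈ A ∧ f x = 0} ⊆
        closure {f : C(X, ℂ) | f ∈ A ∧ ∃ U ∈ 𝓝 x, ∀ y ∈ U, f y = 0})
    (x y : X) (hxy : x ≠ y) :
    ∃ k ∈ A, (∃ U ∈ 𝓝 x, ∀ z ∈ U, k z = 0) ∧ (∃ V ∈ 𝓝 y, ∀ z ∈ V, k z = 1) := by
  haveI : CompleteSpace ↥A := hA.completeSpace_coe
  obtain ⟨f, hfA, hfxy⟩ := hsep x y hxy
  set c : ℂ := (f y - f x)⁻¹ with hc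
  have hcne : f y - f x ≠ 0 := sub_ne_zero.mpr (Ne.symm hfxy)
  set f₀ : C(X, ℂ) := c • (f - f x • (1 : C(X, ℂ))) with hf₀
  have hf₀A : f₀ ∈ A := A.smul_mem (A.sub_mem hfA (A.smul_mem A.one_mem _)) _
  have hf₀x : f₀ x = 0 := by simp [hf₀]
  have hf₀y : f₀ y = 1 := by
    simp only [hf₀, ContinuousMap.smul_apply, ContinuousMap.sub_apply,
      ContinuousMap.one_apply, smul_eq_mul, mul_one]
    exact inv_mul_cancel₀ hcne
  -- approximate f₀ by g vanishing near x
  have h1 := hsr x ⟨hf₀A, hf₀x⟩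
  rw [Metric.mem_closure_iff] at h1
  obtain ⟨g, ⟨hgA, U, hU, hgU⟩, hdg⟩ := h1 (1/2) (by norm_num)
  rw [dist_eq_norm] at hdg
  have hgy : g y ≠ 0 := by
    intro h0
    have := ContinuousMap.dist_apply_le_dist (f := f₀) (g := g) y
    rw [hf₀y, h0, dist_eq_norm] at this
    simp only [dist_eq_norm] at this
    simp at this
    linarith
  set g' : C(X, ℂ) := (g y)⁻¹ • g with hg'
  have hg'A : g' ∈ A := A.smul_mem hgA _
  have hg'U : ∀ z ∈ U, g' z = 0 := fun z hz => by simp [hg', hgU z hz]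
  have hg'y : g' y = 1 := by simp [hg']; exact inv_mul_cancel₀ hgy
  -- approximate 1 - g' by h vanishing near y
  have h2 := hsr y ⟨A.sub_mem A.one_mem hg'A, by simp [hg'y]⟩
  rw [Metric.mem_closure_iff] at h2
  obtain ⟨h, ⟨hhA, V, hV, hhV⟩, hdh⟩ := h2 (1/2) (by norm_num)
  rw [dist_eq_norm] at hdh
  -- u = g' + h is invertible
  set G : ↥A := ⟨g', hg'A⟩ with hG
  set H : ↥A := ⟨h, hhA⟩ with hH
  have hcoe : ((1 - (G + H) : ↥A) : C(X, ℂ)) = (1 - g') - h := by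
    simp only [Subalgebra.coe_sub, Subalgebra.coe_add, Subalgebra.coe_one, hG, hH]
    ring
  have ht : ‖(1 - (G + H) : ↥A)‖ < 1 := by
    have e1 : ‖(1 - (G + H) : ↥A)‖ = ‖((1 - (G + H) : ↥A) : C(X, ℂ))‖ := rfl
    rw [e1, hcoe]
    linarith
  have hunit : IsUnit (G + H) := by
    have := (Units.oneSub (1 - (G + H)) ht).isUnit
    rwa [Units.val_oneSub, sub_sub_cancel] at this
  obtain ⟨ν, hνval⟩ := hunit
  set w : ↥A := ↑ν⁻¹ with hw
  have huw : (G + H) * w = 1 := by rw [← hνval, hw]; exact ν.mul_inv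
  have huwz : ∀ z : X, (g' z + h z) * (w : C(X, ℂ)) z = 1 := by
    intro z
    have h1 := congrArg (Subtype.val) huw
    have h2 := congrFun (congrArg DFunLike.coe h1) z
    simpa [hG, hH] using h2
  refine ⟨g' * (w : C(X, ℂ)), A.mul_mem hg'A w.2, ⟨U, hU, fun z hz => ?_⟩,
    ⟨V, hV, fun z hz => ?_⟩⟩
  · simp [hg'U z hz]
  · have hhz : h z = 0 := hhV z hz
    have := huwz z
    rw [hhz, add_zero] at this
    simpa using this

theorem wilken_point_closed {X : Type*} [TopologicalSpace X] [CompactSpace X] [T2Space X]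
    (A : Subalgebra ℂ C(X, ℂ)) (hA : IsClosed (A : Set C(X, ℂ)))
    (hsep : ∀ x y : X, x ≠ y → ∃ f ∈ A, f x ≠ f y)
    (hsr : ∀ x : X,
      {f : C(X, ℂ) | f ∈ A ∧ f x = 0} ⊆
        closure {f : C(X, ℂ) | f ∈ A ∧ ∃ U ∈ 𝓝 x, ∀ y ∈ U, f y = 0})
    (x : X) (F : Set X) (hF : IsClosed F) (hxF : x ∉ F) :
    ∃ k ∈ A, (∃ U ∈ 𝓝 x, ∀ z ∈ U, k z = 0) ∧ (∀ z ∈ F, k z = 1) := by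
  have key : ∀ y : X, ∃ (k : C(X, ℂ)) (U V : Set X), k ∈ A ∧ U ∈ 𝓝 x ∧ V ∈ 𝓝 y ∧
      (∀ z ∈ U, k z = 0) ∧ (y ∈ F → ∀ z ∈ V, k z = 1) := by
    intro y
    by_cases hy : y ∈ F
    · have hxy : x ≠ y := fun h => hxF (h ▸ hy)
      obtain ⟨k, hkA, ⟨U, hU, hkU⟩, ⟨V, hV, hkV⟩⟩ :=
        wilken_two_point A hA hsep hsr x y hxy
      exact ⟨k, U, V, hkA, hU, hV, hkU, fun _ => hkV⟩
    · exact ⟨0, Set.univ, Set.univ, A.zero_mem, Filter.univ_mem, Filter.univ_mem,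
        fun z _ => rfl, fun h => absurd h hy⟩
  choose k U V hkA hU hV hkU hkV using key
  obtain ⟨t, htF, hcov⟩ := (hF.isCompact).elim_nhds_subcover V (fun y _ => hV y)
  refine ⟨1 - ∏ y ∈ t, (1 - k y), A.sub_mem A.one_mem
    (A.prod_mem fun y _ => A.sub_mem A.one_mem (hkA y)), ⟨⋂ y ∈ t, U y,
    (Filter.biInter_finset_mem t).mpr fun y _ => hU y, fun z hz => ?_⟩, fun z hz => ?_⟩
  · simp only [ContinuousMap.sub_apply, ContinuousMap.one_apply, ContinuousMap.prod_apply]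
    have hp : ∏ y ∈ t, (1 - (k y) z) = 1 := Finset.prod_eq_one fun y hy => by
      have hzU : z ∈ U y := by
        simp only [Set.mem_iInter] at hz
        exact hz y hy
      rw [hkU y z hzU]; ring
    rw [hp]; ring
  · obtain ⟨y, hyt, hzV⟩ : ∃ y ∈ t, z ∈ V y := by
      have := hcov hz
      simpa using this
    simp only [ContinuousMap.sub_apply, ContinuousMap.one_apply, ContinuousMap.prod_apply]
    rw [Finset.prod_eq_zero hyt (show 1 - (k y) z = 0 by rw [hkV y (htF y hyt) z hzV]; ring)]
    ring

/-- **Wilken's theorem.** If a uniform algebra `A` on a compact Hausdorff space `X` is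
strongly regular on `X`, then every character of `A` is an evaluation character at some
point of `X`, and `A` is normal on `X`. -/
theorem stmt_0 {X : Type*} [TopologicalSpace X] [CompactSpace X] [T2Space X]
    (A : Subalgebra ℂ C(X, ℂ)) (hA : IsClosed (A : Set C(X, ℂ)))
    (hsep : ∀ x y : X, x ≠ y → ∃ f ∈ A, f x ≠ f y)
    (hsr : ∀ x : X,
      {f : C(X, ℂ) | f ∈ A ∧ f x = 0} ⊆
        closure {f : C(X, ℂ) | f ∈ A ∧ ∃ U ∈ 𝓝 x, ∀ y ∈ U, f y = 0}) :
    (∀ φ : A →ₐ[ℂ] ℂ, ∃ x : X, ∀ f : A, φ f = (f : C(X, ℂ)) x) ∧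
    (∀ E F : Set X, IsClosed E → IsClosed F → Disjoint E F →
      ∃ f ∈ A, (∀ x ∈ E, f x = 0) ∧ (∀ x ∈ F, f x = 1)) := by
  haveI : CompleteSpace ↥A := hA.completeSpace_coe
  constructor
  · -- part (a)
    intro φ
    by_cases hX : Nonempty X
    swap
    · -- X empty: A is trivial, no characters
      exfalso
      have h10 : (1 : ↥A) = 0 := by
        apply Subtype.ext
        apply ContinuousMap.ext
        intro z
        exact absurd ⟨z⟩ hX
      have : (1 : ℂ) = 0 := by rw [← map_one φ, h10, map_zero]
      exact one_ne_zero this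
    haveI : NormOneClass ↥A := ⟨show ‖(1 : C(X, ℂ))‖ = 1 from norm_one⟩
    have hφ : ∀ a : ↥A, ‖φ a‖ ≤ ‖a‖ := fun a =>
      spectrum.norm_le_norm_of_mem (AlgHom.apply_mem_spectrum φ a)
    by_contra hc
    push_neg at hc
    have key : ∀ x : X, ∃ (g : ↥A) (U : Set X), U ∈ 𝓝 x ∧
        (∀ z ∈ U, (g : C(X, ℂ)) z = 0) ∧ φ g ≠ 0 := by
      intro x
      obtain ⟨f, hf⟩ := hc x
      set c : ℂ := φ f - (f : C(X, ℂ)) x with hcdef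
      have hcne : c ≠ 0 := sub_ne_zero.mpr hf
      set p : ↥A := algebraMap ℂ ↥A c⁻¹ * (f - algebraMap ℂ ↥A ((f : C(X, ℂ)) x)) with hp
      have hφp : φ p = 1 := by
        rw [hp, map_mul, map_sub, AlgHom.commutes, AlgHom.commutes]
        simp only [Algebra.algebraMap_self, RingHom.id_apply]
        rw [← hcdef]
        exact inv_mul_cancel₀ hcne
      have hpx : (p : C(X, ℂ)) x = 0 := by
        have hco : (p : C(X, ℂ)) = algebraMap ℂ C(X, ℂ) c⁻¹ *
            ((f : C(X, ℂ)) - algebraMap ℂ C(X, ℂ) ((f : C(X, ℂ)) x)) := by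
          rw [hp]
          rw [show (p : C(X, ℂ)) = A.val p from rfl] at *
          rw [map_mul, map_sub, AlgHom.commutes, AlgHom.commutes]
          rfl
        rw [hco]
        simp [algebraMap_apply]
      have hmem := hsr x ⟨p.2, hpx⟩
      rw [Metric.mem_closure_iff] at hmem
      obtain ⟨g, ⟨hgA, U, hU, hgU⟩, hdg⟩ := hmem (1/2) (by norm_num)
      refine ⟨⟨g, hgA⟩, U, hU, hgU, fun h0 => ?_⟩
      have hb : ‖φ (p - ⟨g, hgA⟩)‖ ≤ ‖p - (⟨g, hgA⟩ : ↥A)‖ := hφ _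
      have hnc : ‖p - (⟨g, hgA⟩ : ↥A)‖ = dist (p : C(X, ℂ)) g := by
        rw [dist_eq_norm]; rfl
      rw [map_sub, hφp, h0, sub_zero, hnc] at hb
      rw [norm_one] at hb
      linarith
    choose g U hU hgU hgne using key
    obtain ⟨t, -, hcov⟩ := isCompact_univ.elim_nhds_subcover U (fun x _ => hU x)
    have hG0 : (∏ x ∈ t, g x : ↥A) = 0 := by
      apply Subtype.ext
      apply ContinuousMap.ext
      intro z
      obtain ⟨x, hxt, hzU⟩ : ∃ x ∈ t, z ∈ U x := by
        have := hcov (Set.mem_univ z)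
        simpa using this
      have hcoe : ((∏ x ∈ t, g x : ↥A) : C(X, ℂ)) = ∏ x ∈ t, (g x : C(X, ℂ)) :=
        map_prod A.val _ _
      rw [hcoe]
      rw [ContinuousMap.prod_apply]
      exact Finset.prod_eq_zero hxt (hgU x z hzU)
    have : φ (∏ x ∈ t, g x) = 0 := by rw [hG0, map_zero]
    rw [map_prod] at this
    obtain ⟨x, hxt, hx0⟩ := Finset.prod_eq_zero_iff.mp this
    exact hgne x hx0
  · -- part (b)
    intro E F hE hF hEF
    have key : ∀ x : X, ∃ (k : C(X, ℂ)) (U : Set X), k ∈ A ∧ U ∈ 𝓝 x ∧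
        (x ∈ E → ∀ z ∈ U, k z = 0) ∧ (x ∈ E → ∀ z ∈ F, k z = 1) := by
      intro x
      by_cases hx : x ∈ E
      · have hxF : x ∉ F := fun h => (hEF.ne_of_mem hx h) rfl
        obtain ⟨k, hkA, ⟨U, hU, hkU⟩, hkF⟩ :=
          wilken_point_closed A hA hsep hsr x F hF hxF
        exact ⟨k, U, hkA, hU, fun _ => hkU, fun _ => hkF⟩
      · exact ⟨0, Set.univ, A.zero_mem, Filter.univ_mem,
          fun h => absurd h hx, fun h => absurd h hx⟩
    choose k U hkA hU hkU hkF using key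
    obtain ⟨t, htE, hcov⟩ := (hE.isCompact).elim_nhds_subcover U (fun x _ => hU x)
    refine ⟨∏ x ∈ t, k x, A.prod_mem fun x _ => hkA x, fun z hz => ?_, fun z hz => ?_⟩
    · obtain ⟨x, hxt, hzU⟩ : ∃ x ∈ t, z ∈ U x := by
        have := hcov hz
        simpa using this
      rw [ContinuousMap.prod_apply]
      exact Finset.prod_eq_zero hxt (hkU x (htE x hxt) z hzU)
    · rw [ContinuousMap.prod_apply]
      exact Finset.prod_eq_one fun x hxt => hkF x (htE x hxt) z hz
end

section
/- Let A be a Banach function algebra on a compact Hausdorff space X, and let K be a closed subset of X such that I(K) = {f ∈ A : f ≡ 0 on K} is the zero ideal. Suppose that A is strongly regular at every point of K. Then (a) every character of A is an evaluation character ε_x for some x ∈ K, and moreover K = X (so the character space of A is X = K), and (b) A is normal on X. -/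
/-!
If a character `φ` differs from `ε_x` and `B` is strongly regular at `x`, then density of `J_x`
in `M_x` and continuity of `φ` give `e` with `φ e = 1` vanishing near `x`. Over a compact set `S`
of such points, a finite product of these elements vanishes near `S` and still has `φ e = 1`.
For `S = K` this contradicts `I(K) = {0}`, so every character is some `ε_x` with `x ∈ K`, and
since the `ε_x` are pairwise distinct, `K = X`. Now no maximal ideal, i.e. no `ker ε_x`, contains
both `J_E` and `J_F`: the same argument applied to `ε_x` and whichever of `E`, `F` misses `x`
gives an element of that ideal outside `ker ε_x`. So `1 = g + h` with `g ∈ J_E`, `h ∈ J_F`.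
-/

open Topology Filter

section FunctionAlgebra

variable {X : Type*} [TopologicalSpace X] {B : Type*} [NormedCommRing B] [NormedAlgebra ℂ B]
  (ι : B →ₐ[ℂ] C(X, ℂ))

noncomputable abbrev evalChar (x : X) : B →ₐ[ℂ] ℂ :=
  (ContinuousMap.evalAlgHom ℂ ℂ x).comp ι

def IsStronglyRegularAt (x : X) : Prop :=
  {f : B | ι f x = 0} ⊆ closure {f : B | ∃ U ∈ 𝓝 x, ∀ y ∈ U, ι f y = 0}

def nhdsVanishingIdeal (E : Set X) : Ideal B where
  carrier := {f | ∀ᶠ y in 𝓝ˢ E, ι f y = 0}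
  zero_mem' := by simp
  add_mem' {f g} (hf : ∀ᶠ y in 𝓝ˢ E, ι f y = 0) (hg : ∀ᶠ y in 𝓝ˢ E, ι g y = 0) :=
    (hf.and hg).mono fun y h => by simp [h.1, h.2]
  smul_mem' c f (hf : ∀ᶠ y in 𝓝ˢ E, ι f y = 0) := hf.mono fun y h => by simp [h]

variable {ι}

theorem mem_nhdsVanishingIdeal {E : Set X} {f : B} :
    f ∈ nhdsVanishingIdeal ι E ↔ ∀ᶠ y in 𝓝ˢ E, ι f y = 0 :=
  Iff.rfl

theorem evalChar_injective (hsep : ∀ x y : X, x ≠ y → ∃ f : B, ι f x ≠ ι f y) :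
    Function.Injective (evalChar ι) := by
  intro x y hxy
  by_contra hne
  obtain ⟨f, hf⟩ := hsep x y hne
  exact hf (DFunLike.congr_fun hxy f)

variable [CompleteSpace B]

theorem IsStronglyRegularAt.exists_map_eq_one_eventually_eq_zero {x : X}
    (hsr : IsStronglyRegularAt ι x) {φ : B →ₐ[ℂ] ℂ} (hφ : φ ≠ evalChar ι x) :
    ∃ e : B, φ e = 1 ∧ ∀ᶠ y in 𝓝 x, ι e y = 0 := by
  obtain ⟨g, hg⟩ := DFunLike.ne_iff.mp hφ
  set k : B := g - ι g x • 1
  have hφk : φ k ≠ 0 := by simpa [k, sub_eq_zero] using hg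
  have hk : (φ k)⁻¹ • k ∈ closure {f : B | ∃ U ∈ 𝓝 x, ∀ y ∈ U, ι f y = 0} :=
    hsr (by simp [k])
  -- Characters of a Banach algebra are continuous, so `{f | φ f ≠ 0}` is open.
  obtain ⟨j, hj, U, hU, hjU⟩ := mem_closure_iff.mp hk {f | φ f ≠ 0}
    (isOpen_ne_fun (map_continuous φ) continuous_const) (by simp [hφk])
  refine ⟨(φ j)⁻¹ • j, by simp [inv_mul_cancel₀ hj], ?_⟩
  filter_upwards [hU] with y hy
  simp [hjU y hy]

theorem exists_mem_nhdsVanishingIdeal_map_eq_one {S : Set X} (hS : IsCompact S)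
    (hsr : ∀ x ∈ S, IsStronglyRegularAt ι x) {φ : B →ₐ[ℂ] ℂ}
    (hφ : ∀ x ∈ S, φ ≠ evalChar ι x) :
    ∃ e ∈ nhdsVanishingIdeal ι S, φ e = 1 := by
  refine hS.induction_on (p := fun t => ∃ e ∈ nhdsVanishingIdeal ι t, φ e = 1)
    ⟨1, by simp [nhdsVanishingIdeal, nhdsSet_empty], map_one φ⟩ (fun s t hst ht => ?_)
    (fun s t hs ht => ?_) fun x hx => ?_
  · obtain ⟨e, he, hφe⟩ := ht
    exact ⟨e, Eventually.filter_mono (nhdsSet_mono hst) he, hφe⟩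
  · obtain ⟨e, he, hφe⟩ := hs
    obtain ⟨e', he', hφe'⟩ := ht
    refine ⟨e * e', ?_, by simp [hφe, hφe']⟩
    rw [mem_nhdsVanishingIdeal, nhdsSet_union, eventually_sup]
    exact ⟨(mem_nhdsVanishingIdeal.mp he).mono fun y hy => by simp [hy],
      (mem_nhdsVanishingIdeal.mp he').mono fun y hy => by simp [hy]⟩
  · obtain ⟨e, hφe, he⟩ := (hsr x hx).exists_map_eq_one_eventually_eq_zero (hφ x hx)
    exact ⟨interior {y | ι e y = 0},
      mem_nhdsWithin_of_mem_nhds (interior_mem_nhds.mpr he), e,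
      subset_interior_iff_mem_nhdsSet.mp subset_rfl, hφe⟩

theorem exists_mem_eq_evalChar {K : Set X} (hK : IsCompact K)
    (hIK : ∀ f : B, (∀ x ∈ K, ι f x = 0) → f = 0) (hsr : ∀ x ∈ K, IsStronglyRegularAt ι x)
    (φ : B →ₐ[ℂ] ℂ) : ∃ x ∈ K, φ = evalChar ι x := by
  by_contra! hφ
  obtain ⟨e, he, hφe⟩ := exists_mem_nhdsVanishingIdeal_map_eq_one hK hsr hφ
  have he0 : e = 0 := hIK e fun x hx => he.self_of_nhdsSet x hx
  simp [he0] at hφe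

theorem nhdsVanishingIdeal_sup_eq_top
    (hsep : ∀ x y : X, x ≠ y → ∃ f : B, ι f x ≠ ι f y) (hsr : ∀ x, IsStronglyRegularAt ι x)
    (hchar : ∀ φ : B →ₐ[ℂ] ℂ, ∃ x, φ = evalChar ι x) {E F : Set X} (hE : IsCompact E)
    (hF : IsCompact F) (hEF : Disjoint E F) :
    nhdsVanishingIdeal ι E ⊔ nhdsVanishingIdeal ι F = ⊤ := by
  by_contra hne
  obtain ⟨M, hM, hJM⟩ := Ideal.exists_le_maximal _ hne
  obtain ⟨x, hx⟩ := hchar (WeakDual.CharacterSpace.equivAlgHom M.toCharacterSpace)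
  have not_le_ker {G : Set X} (hG : IsCompact G) (hxG : x ∉ G)
      (hGM : nhdsVanishingIdeal ι G ≤ M) : False := by
    obtain ⟨e, he, hxe⟩ := exists_mem_nhdsVanishingIdeal_map_eq_one hG (fun y _ => hsr y)
      fun y hy => (evalChar_injective hsep).ne (ne_of_mem_of_not_mem hy hxG).symm
    have := M.toCharacterSpace_apply_eq_zero_of_mem (hGM he)
    rw [← WeakDual.CharacterSpace.equivAlgHom_coe, hx, hxe] at this
    exact one_ne_zero this
  by_cases hxE : x ∈ E
  · exact not_le_ker hF (Set.disjoint_left.mp hEF hxE) (le_sup_right.trans hJM)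
  · exact not_le_ker hE hxE (le_sup_left.trans hJM)

end FunctionAlgebra

theorem stmt_1_general {X : Type*} [TopologicalSpace X] [CompactSpace X]
    {B : Type*} [NormedCommRing B] [NormedAlgebra ℂ B] [CompleteSpace B]
    (ι : B →ₐ[ℂ] C(X, ℂ))
    (hsep : ∀ x y : X, x ≠ y → ∃ f : B, ι f x ≠ ι f y)
    (K : Set X) (hK : IsClosed K)
    (hIK : ∀ f : B, (∀ x ∈ K, ι f x = 0) → f = 0)
    (hsr : ∀ x ∈ K,
      {f : B | ι f x = 0} ⊆ closure {f : B | ∃ U ∈ 𝓝 x, ∀ y ∈ U, ι f y = 0}) :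
    (∀ φ : B →ₐ[ℂ] ℂ, ∃ x ∈ K, ∀ f : B, φ f = ι f x) ∧ K = Set.univ ∧
    (∀ E F : Set X, IsClosed E → IsClosed F → Disjoint E F →
      ∃ f : B, (∀ x ∈ E, ι f x = 0) ∧ (∀ x ∈ F, ι f x = 1)) := by
  have hchar := exists_mem_eq_evalChar hK.isCompact hIK hsr
  have hKuniv : K = Set.univ := Set.eq_univ_of_forall fun y => by
    obtain ⟨x, hxK, hx⟩ := hchar (evalChar ι y)
    rwa [evalChar_injective hsep hx]
  refine ⟨fun φ => ?_, hKuniv, fun E F hE hF hEF => ?_⟩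
  · obtain ⟨x, hxK, rfl⟩ := hchar φ
    exact ⟨x, hxK, fun f => rfl⟩
  · have hsr' (x : X) : IsStronglyRegularAt ι x := hsr x (hKuniv ▸ Set.mem_univ x)
    have hchar' (φ : B →ₐ[ℂ] ℂ) : ∃ x, φ = evalChar ι x :=
      (hchar φ).imp fun _ => And.right
    have hJ := nhdsVanishingIdeal_sup_eq_top hsep hsr' hchar' hE.isCompact hF.isCompact hEF
    obtain ⟨g, hg, h, hh, hgh⟩ := Submodule.mem_sup.mp ((Ideal.eq_top_iff_one _).mp hJ)
    refine ⟨g, fun x hx => hg.self_of_nhdsSet x hx, fun x hx => ?_⟩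
    simpa [hh.self_of_nhdsSet x hx] using congrArg (fun b => ι b x) hgh

/-- **Mortini's theorem.** If `B` is a Banach function algebra on a compact Hausdorff
space `X` (realised via an injective algebra homomorphism `ι` into `C(X)` whose range
separates points), `K ⊆ X` is closed with `I(K) = {0}`, and `B` is strongly regular at
every point of `K`, then every character of `B` is evaluation at a point of `K`,
`K = X`, and `B` is normal on `X`. -/
theorem stmt_1 {X : Type*} [TopologicalSpace X] [CompactSpace X] [T2Space X]
    {B : Type*} [NormedCommRing B] [NormedAlgebra ℂ B] [CompleteSpace B]
    (ι : B →ₐ[ℂ] C(X, ℂ)) (hι : Function.Injective ι)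
    (hsep : ∀ x y : X, x ≠ y → ∃ f : B, ι f x ≠ ι f y)
    (K : Set X) (hK : IsClosed K)
    (hIK : ∀ f : B, (∀ x ∈ K, ι f x = 0) → f = 0)
    (hsr : ∀ x ∈ K,
      {f : B | ι f x = 0} ⊆ closure {f : B | ∃ U ∈ 𝓝 x, ∀ y ∈ U, ι f y = 0}) :
    (∀ φ : B →ₐ[ℂ] ℂ, ∃ x ∈ K, ∀ f : B, φ f = ι f x) ∧ K = Set.univ ∧
    (∀ E F : Set X, IsClosed E → IsClosed F → Disjoint E F →
      ∃ f : B, (∀ x ∈ E, ι f x = 0) ∧ (∀ x ∈ F, ι f x = 1)) :=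
  stmt_1_general ι hsep K hK hIK hsr
end

section
/- Let A be a Banach function algebra on a compact Hausdorff space X which is 2-local on X, and let y ∈ X. Then the set F = {x ∈ X : J_x ⊆ M_y} is connected. -/
open Topology

/-- For a Banach function algebra `B` on a compact Hausdorff space `X` which is
`2`-local on `X`, and `y ∈ X`, the set `F = {x ∈ X : J_x ⊆ M_y}` is connected. -/
theorem stmt_5 {X : Type*} [TopologicalSpace X] [CompactSpace X] [T2Space X]
    {B : Type*} [NormedCommRing B] [NormedAlgebra ℂ B] [CompleteSpace B]
    (ι : B →ₐ[ℂ] C(X, ℂ)) (hι : Function.Injective ι)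
    (hsep : ∀ x y : X, x ≠ y → ∃ f : B, ι f x ≠ ι f y)
    (h2 : ∀ f : C(X, ℂ), ∀ g₁ g₂ : B,
      (∀ x : X, ∃ U ∈ 𝓝 x, (∀ y ∈ U, f y = ι g₁ y) ∨ (∀ y ∈ U, f y = ι g₂ y)) →
      ∃ g : B, ι g = f)
    (y : X) (F : Set X)
    (hF : F = {x : X | ∀ f : B, (∃ U ∈ 𝓝 x, ∀ z ∈ U, ι f z = 0) → ι f y = 0}) :
    IsConnected F := by
  have hyF : y ∈ F := by
    rw [hF]
    intro f ⟨U, hU, hvan⟩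
    exact hvan y (mem_of_mem_nhds hU)
  have hFclosed : IsClosed F := by
    rw [← isOpen_compl_iff, isOpen_iff_mem_nhds]
    intro x hx
    rw [hF] at hx
    simp only [Set.mem_compl_iff, Set.mem_setOf_eq] at hx
    push_neg at hx
    obtain ⟨f, ⟨U, hU, hvan⟩, hfy⟩ := hx
    filter_upwards [interior_mem_nhds.mpr hU] with z hz
    rw [hF]
    simp only [Set.mem_compl_iff, Set.mem_setOf_eq]
    push_neg
    exact ⟨f, ⟨interior U, isOpen_interior.mem_nhds hz,
      fun w hw => hvan w (interior_subset hw)⟩, hfy⟩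
  -- key lemma : F cannot be split into two nonempty disjoint closed pieces
  have key : ∀ (u v : Set X), IsClosed u → IsClosed v → F ⊆ u ∪ v → Disjoint u v →
      y ∈ u → ∀ z, z ∈ F → z ∉ u → False := by
    intro u v hu hv hcover hdisj hyu z hzF hzu
    have hzv : z ∈ v := (hcover hzF).resolve_left hzu
    obtain ⟨U, V, hUo, hVo, huU, hvV, hUV⟩ := normal_separation hu hv hdisj
    set K : Set X := (U ∪ V)ᶜ with hKdef
    have hKc : IsCompact K := ((hUo.union hVo).isClosed_compl).isCompact
    have hKF : ∀ x ∈ K, ∃ (f : B) (N : Set X),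
        IsOpen N ∧ x ∈ N ∧ (∀ w ∈ N, ι f w = 0) ∧ ι f y ≠ 0 := by
      intro x hx
      have hxF : x ∉ F := by
        intro h
        exact hx (Set.union_subset_union huU hvV (hcover h))
      rw [hF] at hxF
      simp only [Set.mem_setOf_eq] at hxF
      push_neg at hxF
      obtain ⟨f, ⟨N, hN, hvan⟩, hfy⟩ := hxF
      exact ⟨f, interior N, isOpen_interior, mem_interior_iff_mem_nhds.mpr hN,
        fun w hw => hvan w (interior_subset hw), hfy⟩
    choose f N hNopen hxN hvan hfy using hKF
    obtain ⟨t, ht⟩ := hKc.elim_nhds_subcover' N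
      (fun x hx => (hNopen x hx).mem_nhds (hxN x hx))
    set g : B := ∏ x ∈ t, f x x.2 with hgdef
    set W : Set X := ⋃ x ∈ t, N x.1 x.2 with hWdef
    have hWo : IsOpen W := isOpen_biUnion (fun x _ => hNopen x.1 x.2)
    have hKW : K ⊆ W := ht
    have hgW : ∀ w ∈ W, ι g w = 0 := by
      intro w hw
      simp only [hWdef, Set.mem_iUnion] at hw
      obtain ⟨x, hxt, hwN⟩ := hw
      rw [hgdef, map_prod]
      simp only [ContinuousMap.coe_prod, Finset.prod_apply]
      exact Finset.prod_eq_zero hxt (hvan x.1 x.2 w hwN)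
    have hgy : ι g y ≠ 0 := by
      rw [hgdef, map_prod]
      simp only [ContinuousMap.coe_prod, Finset.prod_apply]
      exact Finset.prod_ne_zero_iff.mpr (fun x hx => hfy x.1 x.2)
    -- the candidate continuous function
    have hcoverX : ∀ x : X, x ∈ U ∨ x ∈ V ∨ x ∈ W := by
      intro x
      by_cases hxU : x ∈ U
      · exact Or.inl hxU
      by_cases hxV : x ∈ V
      · exact Or.inr (Or.inl hxV)
      · exact Or.inr (Or.inr (hKW (by simp [hKdef, hxU, hxV])))
    have hlocal : ∀ x : X, ∃ S, IsOpen S ∧ x ∈ S ∧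
        ((∀ w ∈ S, Set.indicator U (⇑(ι g)) w = ι g w) ∨
         (∀ w ∈ S, Set.indicator U (⇑(ι g)) w = 0)) := by
      intro x
      rcases hcoverX x with hx | hx | hx
      · exact ⟨U, hUo, hx, Or.inl fun w hw => Set.indicator_of_mem hw _⟩
      · refine ⟨V, hVo, hx, Or.inr fun w hw => Set.indicator_of_notMem ?_ _⟩
        exact fun hwU => hUV.ne_of_mem hwU hw rfl
      · refine ⟨W, hWo, hx, Or.inl fun w hw => ?_⟩
        by_cases hwU : w ∈ U
        · exact Set.indicator_of_mem hwU _
        · rw [Set.indicator_of_notMem hwU, hgW w hw]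
    have hcont : Continuous (Set.indicator U (⇑(ι g))) := by
      rw [continuous_iff_continuousAt]
      intro x
      obtain ⟨S, hSo, hxS, hS⟩ := hlocal x
      rcases hS with hS | hS
      · exact ((map_continuous (ι g)).continuousAt).congr
          (Filter.eventuallyEq_of_mem (hSo.mem_nhds hxS) (fun w hw => (hS w hw).symm))
      · exact continuousAt_const.congr
          (Filter.eventuallyEq_of_mem (hSo.mem_nhds hxS) (fun w hw => (hS w hw).symm))
    set fC : C(X, ℂ) := ⟨Set.indicator U (⇑(ι g)), hcont⟩ with hfCdef
    obtain ⟨h, hh⟩ := h2 fC g 0 (by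
      intro x
      obtain ⟨S, hSo, hxS, hS⟩ := hlocal x
      refine ⟨S, hSo.mem_nhds hxS, ?_⟩
      rcases hS with hS | hS
      · exact Or.inl fun w hw => hS w hw
      · exact Or.inr fun w hw => by rw [map_zero]; exact hS w hw)
    -- h vanishes on V, a neighbourhood of z ∈ F, hence ι h y = 0
    have hhy0 : ι h y = 0 := by
      rw [hF] at hzF
      refine hzF h ⟨V, hVo.mem_nhds (hvV hzv), fun w hw => ?_⟩
      rw [hh]
      exact Set.indicator_of_notMem (fun hwU => hUV.ne_of_mem hwU hw rfl) _
    have hhy1 : ι h y = ι g y := by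
      rw [hh]
      exact Set.indicator_of_mem (huU hyu) _
    exact hgy (hhy1 ▸ hhy0)
  refine ⟨⟨y, hyF⟩, ?_⟩
  rw [isPreconnected_iff_subset_of_fully_disjoint_closed hFclosed]
  intro u v hu hv hcover hdisj
  by_contra hcon
  push_neg at hcon
  obtain ⟨hnu, hnv⟩ := hcon
  obtain ⟨a, haF, hau⟩ := Set.not_subset.mp hnu
  obtain ⟨b, hbF, hbv⟩ := Set.not_subset.mp hnv
  rcases hcover hyF with hyu | hyv
  · exact key u v hu hv hcover hdisj hyu a haF hau
  · exact key v u hv hu (by rwa [Set.union_comm]) hdisj.symm hyv b hbF hbv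
end

section
/- Let A be a Banach function algebra on a compact Hausdorff space X. Let x ∈ X be such that M_x factors (i.e. for every f ∈ M_x there exist g, h ∈ M_x with f = gh) and A is strongly regular at x, and let y ∈ X be such that A is strongly regular at y. Then J_x ∩ J_y is dense in M_x ∩ M_y (with respect to the norm of A). -/
/-!
For `x ≠ y`, pick `s ∈ A` with `s(x) = 1`, `s(y) = 0`. Strong regularity approximates `1 - s` by
`p ∈ J_x` and `s` by `r ∈ J_y` so closely that `p + r` is invertible, since the units of a Banach
algebra are open; then `q = p (p + r)⁻¹` vanishes near `x` and equals `1` near `y`. Given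
`f ∈ M_x ∩ M_y`, approximate `f` by `a ∈ J_x` and by `b ∈ J_y`: the element `a + (b - a) q` lies in
`J_x ∩ J_y` and tends to `f + (f - f) q = f`.
-/

open Topology Filter Pointwise

theorem exists_isUnit_add_of_mem_closure {B : Type*} [NormedRing B] [HasSummableGeomSeries B]
    {s t : Set B} {a b : B} (ha : a ∈ closure s) (hb : b ∈ closure t) (hab : IsUnit (a + b)) :
    ∃ a' ∈ s, ∃ b' ∈ t, IsUnit (a' + b') := by
  have hst : a + b ∈ closure (s + t) :=
    map_mem_closure₂ continuous_add ha hb fun a' ha' b' hb' => Set.add_mem_add ha' hb'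
  obtain ⟨_, hu, a', ha', b', hb', rfl⟩ := mem_closure_iff.1 hst _ Units.isOpen hab
  exact ⟨a', ha', b', hb', hu⟩

section
variable {X : Type*} [TopologicalSpace X]

theorem exists_apply_eq_one_apply_eq_zero {𝕜 A : Type*} [Field 𝕜] [TopologicalSpace 𝕜]
    [IsTopologicalRing 𝕜] [Ring A] [Algebra 𝕜 A] (ι : A →ₐ[𝕜] C(X, 𝕜)) {x y : X} {b : A}
    (hb : ι b x ≠ ι b y) : ∃ s : A, ι s x = 1 ∧ ι s y = 0 := by
  refine ⟨(ι b x - ι b y)⁻¹ • (b - algebraMap 𝕜 A (ι b y)), ?_, by simp⟩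
  simp [inv_mul_cancel₀ (sub_ne_zero.mpr hb)]

variable {R B F : Type*} [CommRing R] [TopologicalSpace R] [IsTopologicalRing R]
  [FunLike F B C(X, R)]

theorem exists_eventually_zero_eventually_one [NormedRing B] [HasSummableGeomSeries B]
    [RingHomClass F B C(X, R)] (ι : F) {x y : X} {s : B} (hsx : ι s x = 1) (hsy : ι s y = 0)
    (hx : {f : B | ι f x = 0} ⊆ closure {g : B | ∀ᶠ z in 𝓝 x, ι g z = 0})
    (hy : {f : B | ι f y = 0} ⊆ closure {g : B | ∀ᶠ z in 𝓝 y, ι g z = 0}) :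
    ∃ q : B, (∀ᶠ z in 𝓝 x, ι q z = 0) ∧ ∀ᶠ z in 𝓝 y, ι q z = 1 := by
  have h1s : ι (1 - s) x = 0 := by simp [hsx]
  obtain ⟨p, hp, r, hr, ⟨u, hu⟩⟩ :=
    exists_isUnit_add_of_mem_closure (hx h1s) (hy hsy) (by simp : IsUnit (1 - s + s))
  refine ⟨p * ↑u⁻¹, ?_, ?_⟩
  · filter_upwards [hp] with z hpz
    simp [hpz]
  · filter_upwards [hr] with z hrz
    have hpu : p * ↑u⁻¹ = 1 - r * ↑u⁻¹ := by
      rw [eq_sub_iff_add_eq, ← add_mul, ← hu, Units.mul_inv]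
    simp [hpu, hrz]

theorem mem_closure_eventually_zero_and_of_eventually_zero_one [Ring B] [TopologicalSpace B]
    [IsTopologicalRing B] [RingHomClass F B C(X, R)] (ι : F) {x y : X} {q f : B}
    (hqx : ∀ᶠ z in 𝓝 x, ι q z = 0) (hqy : ∀ᶠ z in 𝓝 y, ι q z = 1)
    (hfx : f ∈ closure {g : B | ∀ᶠ z in 𝓝 x, ι g z = 0})
    (hfy : f ∈ closure {g : B | ∀ᶠ z in 𝓝 y, ι g z = 0}) :
    f ∈ closure {g : B | (∀ᶠ z in 𝓝 x, ι g z = 0) ∧ ∀ᶠ z in 𝓝 y, ι g z = 0} := by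
  have hf : f + (f - f) * q = f := by simp
  rw [← hf]
  refine map_mem_closure₂ (f := fun a b => a + (b - a) * q) (by fun_prop) hfx hfy
    fun a ha b hb => ⟨?_, ?_⟩
  · filter_upwards [ha, hqx] with z haz hqz
    simp [haz, hqz]
  · filter_upwards [hb, hqy] with z hbz hqz
    simp [hbz, hqz]

end

theorem stmt_7_general {X : Type*} [TopologicalSpace X]
    {B : Type*} [NormedCommRing B] [NormedAlgebra ℂ B] [CompleteSpace B]
    (ι : B →ₐ[ℂ] C(X, ℂ))
    (hsep : ∀ x y : X, x ≠ y → ∃ f : B, ι f x ≠ ι f y)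
    (x y : X)
    (hsrx : {f : B | ι f x = 0} ⊆ closure {f : B | ∃ U ∈ 𝓝 x, ∀ z ∈ U, ι f z = 0})
    (hsry : {f : B | ι f y = 0} ⊆ closure {f : B | ∃ U ∈ 𝓝 y, ∀ z ∈ U, ι f z = 0}) :
    {f : B | ι f x = 0 ∧ ι f y = 0} ⊆
      closure {f : B | (∃ U ∈ 𝓝 x, ∀ z ∈ U, ι f z = 0) ∧
        (∃ V ∈ 𝓝 y, ∀ z ∈ V, ι f z = 0)} := by
  simp only [← eventually_iff_exists_mem] at hsrx hsry ⊢
  intro f hf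
  obtain rfl | hxy := eq_or_ne x y
  · exact closure_mono (fun _ hg => And.intro hg hg) (hsrx hf.1)
  obtain ⟨b, hb⟩ := hsep x y hxy
  obtain ⟨s, hsx, hsy⟩ := exists_apply_eq_one_apply_eq_zero ι hb
  obtain ⟨q, hqx, hqy⟩ := exists_eventually_zero_eventually_one ι hsx hsy hsrx hsry
  exact mem_closure_eventually_zero_and_of_eventually_zero_one ι hqx hqy (hsrx hf.1) (hsry hf.2)

/-- Let `B` be a Banach function algebra on a compact Hausdorff space `X`. If `x ∈ X`
is such that `M_x` factors and `B` is strongly regular at `x`, and `B` is strongly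
regular at `y ∈ X`, then `J_x ∩ J_y` is dense in `M_x ∩ M_y` (in the norm of `B`). -/
theorem stmt_7 {X : Type*} [TopologicalSpace X] [CompactSpace X] [T2Space X]
    {B : Type*} [NormedCommRing B] [NormedAlgebra ℂ B] [CompleteSpace B]
    (ι : B →ₐ[ℂ] C(X, ℂ)) (hι : Function.Injective ι)
    (hsep : ∀ x y : X, x ≠ y → ∃ f : B, ι f x ≠ ι f y)
    (x y : X)
    (hfac : ∀ f : B, ι f x = 0 → ∃ g h : B, ι g x = 0 ∧ ι h x = 0 ∧ f = g * h)
    (hsrx : {f : B | ι f x = 0} ⊆ closure {f : B | ∃ U ∈ 𝓝 x, ∀ z ∈ U, ι f z = 0})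
    (hsry : {f : B | ι f y = 0} ⊆ closure {f : B | ∃ U ∈ 𝓝 y, ∀ z ∈ U, ι f z = 0}) :
    {f : B | ι f x = 0 ∧ ι f y = 0} ⊆
      closure {f : B | (∃ U ∈ 𝓝 x, ∀ z ∈ U, ι f z = 0) ∧
        (∃ V ∈ 𝓝 y, ∀ z ∈ V, ι f z = 0)} :=
  stmt_7_general ι hsep x y hsrx hsry
end

section
/- Let A be a separable Banach algebra. The following are equivalent: (a) the lattice Id(A) of closed two-sided ideals of A is countably-generated; (b) there is a countable subset B of A such that for every closed two-sided ideal I of A, I equals the closure of I ∩ B. -/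
/-!
A countable generating family `S` of closed ideals yields `B` by taking a countable dense subset
of each member of `S` (every subset of a separable metric space is separable). Conversely, from
`B` one takes the closed ideals generated by the points of `B`: a closed ideal `I` contains the
ideal generated by each `b ∈ I ∩ B`, and `I ∩ B` is dense in `I`.
-/

namespace TwoSidedIdeal

variable {R : Type*} [NonUnitalNonAssocRing R] [TopologicalSpace R]

def closedSpan (s : Set R) : TwoSidedIdeal R :=
  sInf {I | IsClosed (I : Set R) ∧ s ⊆ I}

theorem coe_closedSpan (s : Set R) :
    (closedSpan s : Set R) = ⋂ I ∈ {I : TwoSidedIdeal R | IsClosed (I : Set R) ∧ s ⊆ I},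
      (I : Set R) := by
  ext x
  simp [closedSpan, mem_sInf]

theorem isClosed_closedSpan (s : Set R) : IsClosed (closedSpan s : Set R) := by
  rw [coe_closedSpan]
  exact isClosed_biInter fun I hI => hI.1

theorem subset_closedSpan (s : Set R) : s ⊆ closedSpan s := fun _ hx =>
  (mem_sInf R).2 fun _ hI => hI.2 hx

theorem closedSpan_le {s : Set R} {I : TwoSidedIdeal R} (hI : IsClosed (I : Set R))
    (hs : s ⊆ I) : closedSpan s ≤ I := fun _ hx =>
  (mem_sInf R).1 hx I ⟨hI, hs⟩

end TwoSidedIdeal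

open TwoSidedIdeal

theorem Set.Countable.exists_countable_subset_closure_inter {X : Type*} [TopologicalSpace X]
    [TopologicalSpace.PseudoMetrizableSpace X] [TopologicalSpace.SeparableSpace X]
    {S : Set (Set X)} (hS : S.Countable) :
    ∃ B : Set X, B.Countable ∧ ∀ J ∈ S, J ⊆ closure (J ∩ B) := by
  choose D hDsub hDc hDcl using fun J : Set X =>
    (TopologicalSpace.IsSeparable.of_separableSpace J).exists_countable_dense_subset
  refine ⟨⋃ J ∈ S, D J, hS.biUnion fun J _ => hDc J, fun J hJ => (hDcl J).trans ?_⟩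
  exact closure_mono fun x hx => ⟨hDsub J hx, Set.mem_biUnion hJ hx⟩

theorem stmt_13_general {A : Type*} [NormedRing A]
    [TopologicalSpace.SeparableSpace A] :
    (∃ S : Set (TwoSidedIdeal A), S.Countable ∧ (∀ J ∈ S, IsClosed (J : Set A)) ∧
      ∀ I : TwoSidedIdeal A, IsClosed (I : Set A) →
        (I : Set A) = closure (⋃ J ∈ {J ∈ S | (J : Set A) ⊆ (I : Set A)}, (J : Set A))) ↔
    (∃ B : Set A, B.Countable ∧ ∀ I : TwoSidedIdeal A, IsClosed (I : Set A) →
      (I : Set A) = closure ((I : Set A) ∩ B)) := by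
  constructor
  · rintro ⟨S, hSc, -, hS⟩
    obtain ⟨B, hBc, hB⟩ := (hSc.image SetLike.coe).exists_countable_subset_closure_inter
    refine ⟨B, hBc, fun I hI => ?_⟩
    refine subset_antisymm ((hS I hI).le.trans ?_) (closure_minimal Set.inter_subset_left hI)
    refine closure_minimal (Set.iUnion₂_subset fun J ⟨hJS, hJI⟩ => ?_) isClosed_closure
    exact (hB J (Set.mem_image_of_mem _ hJS)).trans <|
      closure_mono (Set.inter_subset_inter_left B hJI)
  · rintro ⟨B, hBc, hB⟩
    refine ⟨(fun b => closedSpan {b}) '' B, hBc.image _, ?_, fun I hI => ?_⟩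
    · rintro _ ⟨b, -, rfl⟩
      exact isClosed_closedSpan _
    refine subset_antisymm ((hB I hI).le.trans ?_)
      (closure_minimal (Set.iUnion₂_subset fun _ hJ => hJ.2) hI)
    refine closure_mono fun b ⟨hbI, hbB⟩ => Set.mem_biUnion
      ⟨Set.mem_image_of_mem _ hbB, closedSpan_le hI (Set.singleton_subset_iff.2 hbI)⟩ ?_
    exact subset_closedSpan {b} rfl

/-- **Beckhoff's lemma.** For a separable Banach algebra `A`, the lattice of closed
two-sided ideals of `A` is countably generated if and only if there is a countable
subset `B` of `A` such that every closed two-sided ideal `I` of `A` satisfies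
`I = closure (I ∩ B)`. -/
theorem stmt_13 {A : Type*} [NormedRing A] [NormedAlgebra ℂ A] [CompleteSpace A]
    [TopologicalSpace.SeparableSpace A] :
    (∃ S : Set (TwoSidedIdeal A), S.Countable ∧ (∀ J ∈ S, IsClosed (J : Set A)) ∧
      ∀ I : TwoSidedIdeal A, IsClosed (I : Set A) →
        (I : Set A) = closure (⋃ J ∈ {J ∈ S | (J : Set A) ⊆ (I : Set A)}, (J : Set A))) ↔
    (∃ B : Set A, B.Countable ∧ ∀ I : TwoSidedIdeal A, IsClosed (I : Set A) →
      (I : Set A) = closure ((I : Set A) ∩ B)) :=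
  stmt_13_general
end

section
/- Let A be a separable Banach function algebra on a compact Hausdorff space X, and set E = {x ∈ X : the closure of J_x in A is not equal to M_x}. If the lattice Id(A) of closed ideals of A is countably-generated, then E is a meagre subset of X. -/
/-!
Let `S` be a countable family generating `Id(A)`. The hull (common zero set) of an ideal is
closed, so its frontier is nowhere dense and the union `F` of the frontiers of the hulls of the
members of `S` is meagre. If `x ∉ F` and `J ∈ S` lies in `M_x`, then `x` is in the hull of `J`
but not on its frontier, hence in its interior, so every element of `J` vanishes near `x`:
`J ⊆ J_x`. As `M_x` is closed and is the closure of the union of such `J`, the closure of `J_x`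
is `M_x`. Hence `E ⊆ F`.
-/

open Topology

theorem IsClosed.isNowhereDense_frontier {X : Type*} [TopologicalSpace X] {s : Set X}
    (hs : IsClosed s) : IsNowhereDense (frontier s) := by
  rw [IsNowhereDense, isClosed_frontier.closure_eq]
  exact interior_frontier hs

namespace FunctionAlgebra

section Semiring

variable {X B : Type*} [TopologicalSpace X] [Semiring B] [Algebra ℂ B]
  (ι : B →ₐ[ℂ] C(X, ℂ))

/-- The ideal `M_x`. -/
noncomputable def idealAt (x : X) : Ideal B :=
  RingHom.ker ((ContinuousMap.evalAlgHom ℂ ℂ x).comp ι)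

/-- The set `J_x`. -/
def vanishingNear (x : X) : Set B :=
  {f | ∃ U ∈ 𝓝 x, ∀ z ∈ U, ι f z = 0}

def hull (s : Set B) : Set X :=
  {x | ∀ f ∈ s, ι f x = 0}

variable {ι}

theorem mem_idealAt {x : X} {f : B} : f ∈ idealAt ι x ↔ ι f x = 0 :=
  RingHom.mem_ker

theorem coe_idealAt (x : X) : (idealAt ι x : Set B) = {f | ι f x = 0} :=
  Set.ext fun _ => mem_idealAt

theorem mem_hull_iff_subset_idealAt {s : Set B} {x : X} :
    x ∈ hull ι s ↔ s ⊆ idealAt ι x :=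
  forall₂_congr fun _ _ => mem_idealAt.symm

variable (ι)

theorem isClosed_hull (s : Set B) : IsClosed (hull ι s) := by
  have : hull ι s = ⋂ f ∈ s, ι f ⁻¹' {0} := by
    ext x
    simp [hull]
  rw [this]
  exact isClosed_biInter fun f _ => isClosed_singleton.preimage (ι f).continuous

theorem vanishingNear_subset_idealAt (x : X) : vanishingNear ι x ⊆ idealAt ι x :=
  fun _ ⟨_, hU, hf⟩ => mem_idealAt.2 (hf x (mem_of_mem_nhds hU))

variable {ι}

theorem subset_vanishingNear_of_mem_interior_hull {s : Set B} {x : X}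
    (hx : x ∈ interior (hull ι s)) : s ⊆ vanishingNear ι x :=
  fun f hf => ⟨interior (hull ι s), isOpen_interior.mem_nhds hx,
    fun _ hz => interior_subset hz f hf⟩

theorem subset_vanishingNear_of_notMem_frontier {s : Set B} {x : X}
    (hs : s ⊆ idealAt ι x) (hx : x ∉ frontier (hull ι s)) : s ⊆ vanishingNear ι x := by
  refine subset_vanishingNear_of_mem_interior_hull ?_
  by_contra hint
  exact hx ⟨subset_closure (mem_hull_iff_subset_idealAt.2 hs), hint⟩

theorem closure_vanishingNear_eq_idealAt [TopologicalSpace B] {κ : Type*} {S : Set κ} {t : κ → Set B} {x : X}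
    (hcl : IsClosed (idealAt ι x : Set B))
    (hgen : (idealAt ι x : Set B) ⊆ closure (⋃ i ∈ S, t i))
    (hnear : ∀ i ∈ S, t i ⊆ vanishingNear ι x) :
    closure (vanishingNear ι x) = idealAt ι x := by
  refine (closure_minimal (vanishingNear_subset_idealAt ι x) hcl).antisymm ?_
  exact hgen.trans (closure_mono (Set.iUnion₂_subset hnear))

end Semiring

/-- Characters of a Banach algebra are automatically continuous. -/
theorem isClosed_idealAt {X B : Type*} [TopologicalSpace X] [NormedRing B] [NormedAlgebra ℂ B]
    [CompleteSpace B] (ι : B →ₐ[ℂ] C(X, ℂ)) (x : X) : IsClosed (idealAt ι x : Set B) :=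
  isClosed_singleton.preimage (map_continuous ((ContinuousMap.evalAlgHom ℂ ℂ x).comp ι))

end FunctionAlgebra

open FunctionAlgebra

theorem stmt_14_general {X : Type*} [TopologicalSpace X]
    {B : Type*} [NormedCommRing B] [NormedAlgebra ℂ B] [CompleteSpace B]
    (ι : B →ₐ[ℂ] C(X, ℂ))
    (hcg : ∃ S : Set (Ideal B), S.Countable ∧ (∀ J ∈ S, IsClosed (J : Set B)) ∧
      ∀ I : Ideal B, IsClosed (I : Set B) →
        (I : Set B) = closure (⋃ J ∈ {J ∈ S | (J : Set B) ⊆ (I : Set B)}, (J : Set B)))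
    (E : Set X)
    (hE : E = {x : X | closure {f : B | ∃ U ∈ 𝓝 x, ∀ z ∈ U, ι f z = 0}
        ≠ {f : B | ι f x = 0}}) :
    IsMeagre E := by
  obtain ⟨S, hS, -, hgen⟩ := hcg
  have hF : IsMeagre (⋃ J ∈ S, frontier (hull ι (J : Set B))) :=
    isMeagre_biUnion hS fun J _ => (isClosed_hull ι J).isNowhereDense_frontier.isMeagre
  refine hF.mono fun x hxE => ?_
  by_contra hxF
  simp only [Set.mem_iUnion₂, not_exists] at hxF
  have hM := isClosed_idealAt ι x
  have hxM : closure (vanishingNear ι x) = idealAt ι x :=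
    closure_vanishingNear_eq_idealAt hM (hgen _ hM).le fun J ⟨hJS, hJM⟩ =>
      subset_vanishingNear_of_notMem_frontier hJM (hxF J hJS)
  subst hE
  rw [coe_idealAt] at hxM
  exact hxE hxM

/-- Let `B` be a separable Banach function algebra on a compact Hausdorff space `X`.
If the lattice of closed ideals of `B` is countably generated, then the exceptional set
`E = {x : closure J_x ≠ M_x}` is a meagre subset of `X`. -/
theorem stmt_14 {X : Type*} [TopologicalSpace X] [CompactSpace X] [T2Space X]
    {B : Type*} [NormedCommRing B] [NormedAlgebra ℂ B] [CompleteSpace B]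
    [TopologicalSpace.SeparableSpace B]
    (ι : B →ₐ[ℂ] C(X, ℂ)) (hι : Function.Injective ι)
    (hsep : ∀ x y : X, x ≠ y → ∃ f : B, ι f x ≠ ι f y)
    (hcg : ∃ S : Set (Ideal B), S.Countable ∧ (∀ J ∈ S, IsClosed (J : Set B)) ∧
      ∀ I : Ideal B, IsClosed (I : Set B) →
        (I : Set B) = closure (⋃ J ∈ {J ∈ S | (J : Set B) ⊆ (I : Set B)}, (J : Set B)))
    (E : Set X)
    (hE : E = {x : X | closure {f : B | ∃ U ∈ 𝓝 x, ∀ z ∈ U, ι f z = 0}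
        ≠ {f : B | ι f x = 0}}) :
    IsMeagre E :=
  stmt_14_general ι hcg E hE
end

section
/- Let B be a Banach function algebra on a compact Hausdorff space X, let x ∈ X, and let A be the uniform closure of B in C(X) (so A is a uniform algebra on X). If B is strongly regular at x, then the set {f ∈ B : f vanishes on some neighbourhood of x} is dense, with respect to the sup norm, in M_x = {f ∈ A : f(x) = 0}. -/
open Topology

/-- Each `eval y ∘ φ` is a character of the Banach algebra `A`, so `‖φ a‖ ≤ ‖a‖ * ‖1‖`. -/
theorem AlgHom.continuous_of_continuousMap {𝕜 A X : Type*} [NormedField 𝕜] [NormedRing A]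
    [NormedAlgebra 𝕜 A] [CompleteSpace A] [TopologicalSpace X] [CompactSpace X]
    (φ : A →ₐ[𝕜] C(X, 𝕜)) : Continuous φ :=
  AddMonoidHomClass.continuous_of_bound φ ‖(1 : A)‖ fun a =>
    (ContinuousMap.norm_le _ (by positivity)).mpr fun y => by
      rw [mul_comm]
      exact AlgHom.norm_apply_le_self_mul_norm_one ((ContinuousMap.evalAlgHom 𝕜 𝕜 y).comp φ) a

/-- `g ↦ g - g x` is continuous, maps `S` into its part vanishing at `x`, and fixes `f`. -/
theorem Subalgebra.closure_setOf_eval_eq_zero_subset {𝕜 X : Type*} [CommRing 𝕜]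
    [TopologicalSpace 𝕜] [IsTopologicalRing 𝕜] [TopologicalSpace X]
    (S : Subalgebra 𝕜 C(X, 𝕜)) (x : X) :
    {f | f ∈ closure (S : Set C(X, 𝕜)) ∧ f x = 0} ⊆ closure {f | f ∈ S ∧ f x = 0} := by
  rintro f ⟨hfS, hfx⟩
  let r : C(X, 𝕜) → C(X, 𝕜) := fun g => g - algebraMap 𝕜 C(X, 𝕜) (g x)
  have hr : Continuous r := by fun_prop
  have hrS : Set.MapsTo r S {f | f ∈ S ∧ f x = 0} := fun g hg =>
    ⟨S.sub_mem hg (S.algebraMap_mem _), by simp [r]⟩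
  have hrf : r f = f := by simp [r, hfx]
  exact hrf ▸ map_mem_closure hr hfS hrS

theorem stmt_15_general {X : Type*} [TopologicalSpace X] [CompactSpace X]
    {B : Type*} [NormedCommRing B] [NormedAlgebra ℂ B] [CompleteSpace B]
    (ι : B →ₐ[ℂ] C(X, ℂ))
    (x : X)
    (hsr : {g : B | ι g x = 0} ⊆ closure {g : B | ∃ U ∈ 𝓝 x, ∀ y ∈ U, ι g y = 0}) :
    {f : C(X, ℂ) | f ∈ closure (Set.range fun g : B => ι g) ∧ f x = 0} ⊆
      closure ((fun g : B => ι g) '' {g : B | ∃ U ∈ 𝓝 x, ∀ y ∈ U, ι g y = 0}) := by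
  have hvanish : {f | f ∈ ι.range ∧ f x = 0} ⊆
      closure (ι '' {g : B | ∃ U ∈ 𝓝 x, ∀ y ∈ U, ι g y = 0}) := by
    rintro _ ⟨⟨g, rfl⟩, hg⟩
    exact image_closure_subset_closure_image ι.continuous_of_continuousMap ⟨g, hsr hg, rfl⟩
  exact (ι.range.closure_setOf_eval_eq_zero_subset x).trans
    (closure_minimal hvanish isClosed_closure)

/-- Let `B` be a Banach function algebra on a compact Hausdorff space `X`, let `x ∈ X`,
and let `A` be the uniform closure of `B` in `C(X)`. If `B` is strongly regular at `x`,
then `J_x(B)` (the functions of `B` vanishing near `x`) is dense, in the sup norm, in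
`M_x(A) = {f ∈ A : f x = 0}`. -/
theorem stmt_15 {X : Type*} [TopologicalSpace X] [CompactSpace X] [T2Space X]
    {B : Type*} [NormedCommRing B] [NormedAlgebra ℂ B] [CompleteSpace B]
    (ι : B →ₐ[ℂ] C(X, ℂ)) (hι : Function.Injective ι)
    (hsep : ∀ x y : X, x ≠ y → ∃ f : B, ι f x ≠ ι f y)
    (x : X)
    (hsr : {g : B | ι g x = 0} ⊆ closure {g : B | ∃ U ∈ 𝓝 x, ∀ y ∈ U, ι g y = 0}) :
    {f : C(X, ℂ) | f ∈ closure (Set.range fun g : B => ι g) ∧ f x = 0} ⊆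
      closure ((fun g : B => ι g) '' {g : B | ∃ U ∈ 𝓝 x, ∀ y ∈ U, ι g y = 0}) :=
  stmt_15_general ι x hsr
end

section
/- Let X be a compact Hausdorff space which has no non-empty perfect subsets (i.e. X contains no non-empty closed subset without isolated points). Then every uniform algebra on X is trivial: every closed subalgebra of C(X) that contains the constant functions and separates the points of X equals C(X). -/
/-! A continuous function on a compact space without perfect subsets has countable range: an
uncountable compact range contains a perfect set `P`, and a minimal closed set whose image contains
`P` is itself perfect. For `g ∈ A` the complement of its range, i.e. of its spectrum in `C(X)`, is
therefore connected, so the spectrum of `g` in the closed subalgebra `A` is the same and `A` is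
inverse-closed. If `f ∈ A` and `f x ≠ f y`, some circle about `f x` misses the countable range of
`f` and separates `f x` from `f y`; rescaled to the unit circle it makes `‖φ‖ < 1` a clopen set,
whose indicator is the uniform limit of `(1 + φ ^ n)⁻¹ ∈ A`. These real idempotents separate
points, so `A` is dense by Stone–Weierstrass, and closed. -/

open Set Filter Topology

section PerfectImage

variable {X Y : Type*} [TopologicalSpace X] [TopologicalSpace Y]

theorem accPt_principal_iff_mem_closure_diff_singleton {x : X} {C : Set X} :
    AccPt x (𝓟 C) ↔ x ∈ closure (C \ {x}) := by
  rw [accPt_principal_iff_clusterPt, mem_closure_iff_clusterPt]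

theorem IsClosed.diff_singleton_of_not_accPt {x : X} {C : Set X} (hC : IsClosed C)
    (hx : ¬AccPt x (𝓟 C)) : IsClosed (C \ {x}) := by
  rw [accPt_principal_iff_mem_closure_diff_singleton] at hx
  refine closure_subset_iff_isClosed.mp fun y hy => ⟨closure_minimal sdiff_subset hC hy, ?_⟩
  rintro rfl
  exact hx hy

theorem exists_minimal_isClosed_superset_image [CompactSpace X] [T1Space Y] {f : X → Y}
    (hf : Continuous f) {P : Set Y} (hP : P ⊆ range f) :
    ∃ K, Minimal (fun K : Set X => IsClosed K ∧ P ⊆ f '' K) K := by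
  refine (zorn_superset_nonempty {K : Set X | IsClosed K ∧ P ⊆ f '' K} ?_ univ
    ⟨isClosed_univ, by rwa [image_univ]⟩).imp fun K hK => hK.2
  intro c hcS hc hne
  replace hc : IsChain (· ⊇ ·) c := hc.symm
  refine ⟨⋂₀ c, ⟨isClosed_sInter fun K hK => (hcS hK).1, fun p hp => ?_⟩,
    fun K hK => sInter_subset_of_mem hK⟩
  have : Nonempty c := hne.to_subtype
  have hfiber (K : c) : IsClosed ((K : Set X) ∩ f ⁻¹' {p}) :=
    (hcS K.2).1.inter (isClosed_singleton.preimage hf)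
  obtain ⟨x, hx⟩ := IsCompact.nonempty_iInter_of_directed_nonempty_isCompact_isClosed
    (fun K : c => (K : Set X) ∩ f ⁻¹' {p})
    ((directedOn_iff_directed.mp hc.directedOn).mono_comp
      (g := (· ∩ f ⁻¹' {p})) _ fun _ _ => inter_subset_inter_left _)
    (fun K => by simpa [inter_nonempty, eq_comm] using (hcS K.2).2 hp)
    (fun K => (hfiber K).isCompact) hfiber
  simp only [mem_iInter, mem_inter_iff, mem_preimage, mem_singleton_iff] at hx
  exact ⟨x, mem_sInter.mpr fun K hK => (hx ⟨K, hK⟩).1, (hx ⟨_, hne.some_mem⟩).2⟩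

theorem Perfect.exists_perfect_nonempty_of_subset_range [CompactSpace X] [T2Space Y]
    {f : X → Y} (hf : Continuous f) {P : Set Y} (hP : Perfect P) (hne : P.Nonempty)
    (hPf : P ⊆ range f) : ∃ K : Set X, K.Nonempty ∧ Perfect K := by
  obtain ⟨K, ⟨hK, hPK⟩, hmin⟩ := exists_minimal_isClosed_superset_image hf hPf
  refine ⟨K, (hne.mono hPK).of_image, hK, fun x hxK => ?_⟩
  by_contra hx
  have hKx := hK.diff_singleton_of_not_accPt hx
  obtain ⟨p, hpP, hp⟩ := not_subset.mp fun h => (hmin ⟨hKx, h⟩ sdiff_subset hxK).2 rfl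
  obtain ⟨z, hzK, rfl⟩ := hPK hpP
  obtain rfl : z = x := by_contra fun hzx => hp ⟨z, ⟨hzK, hzx⟩, rfl⟩
  have hsub : P \ {f z} ⊆ f '' (K \ {z}) := by
    rintro q ⟨hqP, hq⟩
    obtain ⟨y, hyK, rfl⟩ := hPK hqP
    exact ⟨y, ⟨hyK, fun hyz => hq (congrArg f hyz)⟩, rfl⟩
  exact hp ((hKx.isCompact.image hf).isClosed.closure_subset_iff.mpr hsub
    (accPt_principal_iff_mem_closure_diff_singleton.mp (hP.acc _ hpP)))

theorem Continuous.countable_range_of_not_exists_perfect [CompactSpace X] [T2Space Y]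
    [SecondCountableTopology Y] (hX : ¬ ∃ P : Set X, P.Nonempty ∧ Perfect P) {f : X → Y}
    (hf : Continuous f) : (range f).Countable := by
  by_contra hunc
  obtain ⟨P, hP, hne, hPf⟩ :=
    exists_perfect_nonempty_of_isClosed_of_not_countable (isCompact_range hf).isClosed hunc
  exact hX (hP.exists_perfect_nonempty_of_subset_range hf hne hPf)

end PerfectImage

theorem Set.Countable.exists_gap_of_isClosed {N : Set ℝ} (hN : N.Countable) (hNc : IsClosed N)
    {a b : ℝ} (hab : a < b) : ∃ r R, a < r ∧ r < R ∧ R < b ∧ ∀ s ∈ N, s ≤ r ∨ R ≤ s := by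
  obtain ⟨t, htab, htN⟩ :=
    (hN.dense_compl ℝ).inter_open_nonempty _ isOpen_Ioo (nonempty_Ioo.mpr hab)
  obtain ⟨l, u, ⟨hlt, htu⟩, hsub⟩ := mem_nhds_iff_exists_Ioo_subset.mp
    ((isOpen_Ioo.inter hNc.isOpen_compl).mem_nhds ⟨htab, htN⟩)
  have hr : (l + t) / 2 ∈ Ioo l u := ⟨by linarith, by linarith⟩
  have hR : (t + u) / 2 ∈ Ioo l u := ⟨by linarith, by linarith⟩
  refine ⟨(l + t) / 2, (t + u) / 2, (hsub hr).1.1, by linarith, (hsub hR).1.2, fun s hs => ?_⟩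
  by_contra! h
  exact (hsub ⟨by linarith, by linarith⟩).2 hs

theorem norm_inv_one_add_sub_one_le {𝕜 : Type*} [NormedDivisionRing 𝕜] {w : 𝕜} {ρ : ℝ}
    (hρ : ρ < 1) (hw : ‖w‖ ≤ ρ) : ‖(1 + w)⁻¹ - 1‖ ≤ ρ / (1 - ρ) := by
  have hpos : 0 < 1 - ρ := by linarith
  have hlow : 1 - ρ ≤ ‖1 + w‖ := by
    have := norm_sub_norm_le (1 : 𝕜) (-w)
    rw [norm_one, norm_neg, sub_neg_eq_add] at this
    linarith
  have hne : (1 + w : 𝕜) ≠ 0 := norm_pos_iff.mp (hpos.trans_le hlow)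
  have hid : (1 + w)⁻¹ - 1 = -(w * (1 + w)⁻¹) := by
    rw [eq_neg_iff_add_eq_zero, sub_add_eq_add_sub, ← one_add_mul, mul_inv_cancel₀ hne, sub_self]
  rw [hid, norm_neg, norm_mul, norm_inv, ← div_eq_mul_inv]
  exact div_le_div₀ (by linarith [norm_nonneg w]) hw hpos hlow

theorem norm_inv_one_add_le {𝕜 : Type*} [NormedDivisionRing 𝕜] {w : 𝕜} {ρ : ℝ}
    (hρ0 : 0 < ρ) (hρ : ρ < 1) (hw : ρ⁻¹ ≤ ‖w‖) : ‖(1 + w)⁻¹‖ ≤ ρ / (1 - ρ) := by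
  have hpos : 0 < (1 - ρ) / ρ := by apply div_pos <;> linarith
  have hlow : (1 - ρ) / ρ ≤ ‖1 + w‖ := by
    have := norm_sub_norm_le w (-1 : 𝕜)
    rw [norm_neg, norm_one, sub_neg_eq_add, add_comm] at this
    rw [sub_div, div_self hρ0.ne', one_div]
    linarith
  rw [norm_inv, ← one_div, show ρ / (1 - ρ) = 1 / ((1 - ρ) / ρ) by field_simp]
  exact one_div_le_one_div_of_le hpos hlow

section ContinuousFunctions

variable {X : Type*} [TopologicalSpace X] [CompactSpace X]

theorem Subalgebra.exists_mul_eq_one_of_countable_range {A : Subalgebra ℂ C(X, ℂ)}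
    (hA : IsClosed (A : Set C(X, ℂ))) {g : C(X, ℂ)} (hg : g ∈ A) (hcount : (range g).Countable)
    (h0 : ∀ x, g x ≠ 0) : ∃ h ∈ A, g * h = 1 := by
  -- `Subalgebra.spectrum_eq_of_isPreconnected_compl` takes closedness as an instance
  have : IsClosed (A : Set C(X, ℂ)) := hA
  have hconn : IsPreconnected (spectrum ℂ g)ᶜ := by
    rw [ContinuousMap.spectrum_eq_range]
    exact (hcount.isPathConnected_compl_of_one_lt_rank
      (by simp [Complex.rank_real_complex])).isConnected.isPreconnected
  have hspec : spectrum ℂ (⟨g, hg⟩ : A) = range g := by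
    rw [Subalgebra.spectrum_eq_of_isPreconnected_compl A ⟨g, hg⟩ hconn,
      ContinuousMap.spectrum_eq_range]
  obtain ⟨u, hu⟩ : IsUnit (⟨g, hg⟩ : A) := by
    rw [← spectrum.zero_notMem_iff ℂ, hspec]
    rintro ⟨x, hx⟩
    exact h0 x hx
  refine ⟨(u⁻¹ : Aˣ), (u⁻¹ : Aˣ).1.2, ?_⟩
  simpa [hu] using congrArg Subtype.val u.mul_inv

theorem Subalgebra.exists_mem_apply_eq_ite_norm_lt_one {A : Subalgebra ℂ C(X, ℂ)}
    (hA : IsClosed (A : Set C(X, ℂ))) (hinv : ∀ g ∈ A, (∀ x, g x ≠ 0) → ∃ h ∈ A, g * h = 1)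
    {φ : C(X, ℂ)} (hφ : φ ∈ A) {r R : ℝ} (hr : r < 1) (hR : 1 < R)
    (hgap : ∀ x, ‖φ x‖ ≤ r ∨ R ≤ ‖φ x‖) :
    ∃ e ∈ A, ∀ x, e x = if ‖φ x‖ < 1 then 1 else 0 := by
  have hunit (n : ℕ) : ∃ h ∈ A, (1 + φ ^ (n + 1)) * h = 1 := by
    refine hinv _ (add_mem (one_mem A) (pow_mem hφ _)) fun x hx => ?_
    have hx' : φ x ^ (n + 1) = -1 := eq_neg_of_add_eq_zero_right (by simpa using hx)
    have : ‖φ x‖ ^ (n + 1) = 1 := by rw [← norm_pow, hx', norm_neg, norm_one]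
    rcases hgap x with hx | hx <;>
      linarith [(pow_eq_one_iff_of_nonneg (norm_nonneg (φ x)) n.succ_ne_zero).mp this]
  choose h hhA hh using hunit
  have hh_apply (n : ℕ) (x : X) : h n x = (1 + φ x ^ (n + 1))⁻¹ :=
    eq_inv_of_mul_eq_one_right (by simpa using congrArg (· x) (hh n))
  -- both regimes are controlled by the single ratio `ρ = max r R⁻¹ < 1`
  set ρ := max r R⁻¹
  have hρ0 : 0 < ρ := lt_max_of_lt_right (inv_pos.mpr (by linarith))
  have hρ1 : ρ < 1 := max_lt hr (inv_lt_one_of_one_lt₀ hR)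
  have hbound (n : ℕ) (x : X) :
      dist (if ‖φ x‖ < 1 then 1 else 0) (h n x) ≤ ρ ^ (n + 1) / (1 - ρ ^ (n + 1)) := by
    have hρn : ρ ^ (n + 1) < 1 := pow_lt_one₀ hρ0.le hρ1 n.succ_ne_zero
    rw [hh_apply, dist_comm, dist_eq_norm]
    rcases hgap x with hx | hx
    · rw [if_pos (by linarith)]
      refine norm_inv_one_add_sub_one_le hρn ?_
      rw [norm_pow]
      exact pow_le_pow_left₀ (norm_nonneg _) (hx.trans (le_max_left _ _)) _
    · rw [if_neg (by linarith), sub_zero]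
      refine norm_inv_one_add_le (pow_pos hρ0 _) hρn ?_
      rw [norm_pow, ← inv_pow]
      exact pow_le_pow_left₀ (by positivity)
        ((inv_le_of_inv_le₀ (by linarith) (le_max_right _ _)).trans hx) _
  have hlim : Tendsto (fun n : ℕ => ρ ^ (n + 1) / (1 - ρ ^ (n + 1))) atTop (𝓝 0) := by
    have hpow : Tendsto (fun n : ℕ => ρ ^ (n + 1)) atTop (𝓝 0) :=
      (tendsto_pow_atTop_nhds_zero_of_lt_one hρ0.le hρ1).comp (tendsto_add_atTop_nat 1)
    have := hpow.div (tendsto_const_nhds.sub hpow) (by norm_num : (1 : ℝ) - 0 ≠ 0)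
    rwa [sub_zero, zero_div] at this
  have hunif : TendstoUniformly (fun n x => h n x)
      (fun x => if ‖φ x‖ < 1 then (1 : ℂ) else 0) atTop :=
    Metric.tendstoUniformly_iff.mpr fun ε hε =>
      (hlim.eventually (gt_mem_nhds hε)).mono fun n hn x => (hbound n x).trans_lt hn
  let e : C(X, ℂ) := ⟨_, hunif.continuous (Frequently.of_forall fun n => (h n).continuous)⟩
  exact ⟨e, hA.mem_of_tendsto (ContinuousMap.tendsto_iff_tendstoUniformly.mpr hunif)
    (Eventually.of_forall hhA), fun x => rfl⟩

theorem Subalgebra.exists_selfAdjoint_mem_apply_ne {A : Subalgebra ℂ C(X, ℂ)}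
    (hX : ¬ ∃ P : Set X, P.Nonempty ∧ Perfect P) (hA : IsClosed (A : Set C(X, ℂ)))
    (hinv : ∀ g ∈ A, (∀ x, g x ≠ 0) → ∃ h ∈ A, g * h = 1)
    {f : C(X, ℂ)} (hf : f ∈ A) {x y : X} (hxy : f x ≠ f y) :
    ∃ e ∈ A, IsSelfAdjoint e ∧ e x ≠ e y := by
  have hdist : Continuous fun z => ‖f z - f x‖ := by fun_prop
  obtain ⟨r, R, hr, hrR, hR, hgap⟩ :=
    (hdist.countable_range_of_not_exists_perfect hX).exists_gap_of_isClosed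
      (isCompact_range hdist).isClosed (norm_pos_iff.mpr (sub_ne_zero.mpr hxy.symm))
  obtain ⟨t, ht, hrt, htR⟩ : ∃ t, 0 < t ∧ r < t ∧ t < R :=
    ⟨(r + R) / 2, by linarith, by linarith, by linarith⟩
  -- the circle of radius `t` about `f x` misses the range of `f`; make it the unit circle
  set φ : C(X, ℂ) := (t⁻¹ : ℂ) • (f - algebraMap ℂ C(X, ℂ) (f x))
  have hφ : φ ∈ A := A.smul_mem (sub_mem hf (A.algebraMap_mem _)) _
  have hφ_norm (z : X) : ‖φ z‖ = ‖f z - f x‖ / t := by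
    simp [φ, div_eq_inv_mul, abs_of_pos ht]
  obtain ⟨e, heA, he⟩ := Subalgebra.exists_mem_apply_eq_ite_norm_lt_one hA hinv hφ
    (r := r / t) (R := R / t) (by rw [div_lt_one ht]; linarith) (by rw [one_lt_div ht]; linarith)
    fun z => by
      rw [hφ_norm]
      exact (hgap _ (mem_range_self z)).imp (div_le_div_of_nonneg_right · ht.le)
        (div_le_div_of_nonneg_right · ht.le)
  refine ⟨e, heA, ?_, ?_⟩
  · ext z
    rw [ContinuousMap.star_apply, he]
    split_ifs <;> simp
  · rw [he, he, hφ_norm, hφ_norm, sub_self, norm_zero, zero_div, if_pos one_pos, if_neg]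
    · exact one_ne_zero
    · rw [not_lt, one_le_div ht]
      linarith

theorem ContinuousMap.subalgebra_eq_top_of_selfAdjoint_separatesPoints {𝕜 : Type*} [RCLike 𝕜]
    {A : Subalgebra 𝕜 C(X, 𝕜)} (hA : IsClosed (A : Set C(X, 𝕜)))
    (hsep : ∀ x y : X, x ≠ y → ∃ e ∈ A, IsSelfAdjoint e ∧ e x ≠ e y) : A = ⊤ := by
  set S := StarAlgebra.adjoin 𝕜 {e | e ∈ A ∧ IsSelfAdjoint e}
  have hSA : (S : Set C(X, 𝕜)) ⊆ A := by
    change (S.toSubalgebra : Set C(X, 𝕜)) ⊆ A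
    rw [StarAlgebra.adjoin_toSubalgebra]
    refine Algebra.adjoin_le ?_
    rintro e (⟨he, -⟩ | ⟨he, hsa⟩)
    · exact he
    · rwa [← (IsSelfAdjoint.star_iff.mp hsa).star_eq]
  have hdense := ContinuousMap.starSubalgebra_topologicalClosure_eq_top_of_separatesPoints S
    fun x y hxy => by
      obtain ⟨e, heA, hsa, hexy⟩ := hsep x y hxy
      exact ⟨e, ⟨e, StarAlgebra.subset_adjoin 𝕜 _ ⟨heA, hsa⟩, rfl⟩, hexy⟩
  refine eq_top_iff.mpr fun f _ => hA.closure_subset_iff.mpr hSA ?_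
  change f ∈ S.topologicalClosure
  rw [hdense]
  trivial

end ContinuousFunctions

theorem stmt_18_general {X : Type*} [TopologicalSpace X] [CompactSpace X]
    (hX : ¬ ∃ P : Set X, P.Nonempty ∧ Perfect P)
    (A : Subalgebra ℂ C(X, ℂ)) (hA : IsClosed (A : Set C(X, ℂ)))
    (hsep : ∀ x y : X, x ≠ y → ∃ f ∈ A, f x ≠ f y) :
    A = ⊤ := by
  have hinv : ∀ g ∈ A, (∀ x, g x ≠ 0) → ∃ h ∈ A, g * h = 1 := fun g hg h0 =>
    A.exists_mul_eq_one_of_countable_range hA hg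
      (g.continuous.countable_range_of_not_exists_perfect hX) h0
  refine ContinuousMap.subalgebra_eq_top_of_selfAdjoint_separatesPoints hA fun x y hxy => ?_
  obtain ⟨f, hf, hfxy⟩ := hsep x y hxy
  exact A.exists_selfAdjoint_mem_apply_ne hX hA hinv hf hfxy

/-- **Rudin's theorem.** If a compact Hausdorff space `X` has no non-empty perfect
subsets, then every uniform algebra on `X` (i.e. every closed subalgebra of `C(X)`
containing the constants and separating points) is all of `C(X)`. -/
theorem stmt_18 {X : Type*} [TopologicalSpace X] [CompactSpace X] [T2Space X]
    (hX : ¬ ∃ P : Set X, P.Nonempty ∧ Perfect P)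
    (A : Subalgebra ℂ C(X, ℂ)) (hA : IsClosed (A : Set C(X, ℂ)))
    (hsep : ∀ x y : X, x ≠ y → ∃ f ∈ A, f x ≠ f y) :
    A = ⊤ :=
  stmt_18_general hX A hA hsep
end
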